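/- arXiv:2309.07635 — 4 statements merged into one kernel-verified Lean document; each statement's English description precedes it below -/
import Mathlib

section
/- For α ∈ (0,1) there exists a constant C > 0, independent of θ, such that for all θ ∈ ℝ, ∫_0^∞ | e^{-αs}/(1+e^{-s+iθ}) + e^{αs}/(1+e^{s+iθ}) | ds ≤ C. -/
open Real Complex MeasureTheory

open Set Filter Topology

/-!
Over the common denominator `(1 + e^{-s+iθ}) (1 + e^{s+iθ}) = 2 e^{iθ} (cosh s + cos θ)` the
integrand becomes `|cosh αs + e^{iθ} cosh (1-α)s| / (cosh s + cos θ)`, and with `b = |1 + e^{iθ}|`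
the denominator is `2 sinh² (s/2) + b²/2`. Write the numerator as
`(cosh αs - cosh (1-α)s) + (1 + e^{iθ}) cosh (1-α)s`. The first part is
`2 sinh (s/2) sinh ((2α-1)s/2) ≤ e^{-γs} · 2 sinh² (s/2)` with `γ = (1 - |2α-1|)/2 > 0`.
The second part carries the factor `b`, which tames the small denominator near `s = 0` when
`cos θ ≈ -1`: its quotient is at most `4 e^{-αs} + 2b/(s² + b²)`, and the Poisson kernel
`b/(s² + b²)` has integral at most `π/2` over `(0, ∞)` whatever `b ≥ 0` is.
-/

lemma Complex.one_add_exp_ne_zero {z : ℂ} (hz : z.re ≠ 0) : 1 + cexp z ≠ 0 := by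
  intro h
  have h1 : ‖cexp z‖ = 1 := by rw [eq_neg_of_add_eq_zero_right h, norm_neg, norm_one]
  rw [Complex.norm_exp, Real.exp_eq_one_iff] at h1
  exact hz h1

lemma integrand_eq_cosh_div (α θ : ℝ) {s : ℝ} (hs : s ≠ 0) :
    cexp (-(α:ℂ) * s) / (1 + cexp (-(s:ℂ) + I * θ))
        + cexp ((α:ℂ) * s) / (1 + cexp ((s:ℂ) + I * θ))
      = (Real.cosh (α * s) + cexp (I * θ) * Real.cosh ((1 - α) * s)) /
          (cexp (I * θ) * (Real.cosh s + Real.cos θ : ℝ)) := by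
  have h₁ : 1 + cexp (-(s:ℂ) + I * θ) ≠ 0 := Complex.one_add_exp_ne_zero (by simpa using hs)
  have h₂ : 1 + cexp ((s:ℂ) + I * θ) ≠ 0 := Complex.one_add_exp_ne_zero (by simpa using hs)
  have h₃ : ((Real.cosh s + Real.cos θ : ℝ) : ℂ) ≠ 0 := by
    have := Real.one_lt_cosh.2 hs
    have := Real.neg_one_le_cos θ
    exact_mod_cast (show Real.cosh s + Real.cos θ ≠ 0 by linarith)
  rw [div_add_div _ _ h₁ h₂,
    div_eq_div_iff (mul_ne_zero h₁ h₂) (mul_ne_zero (Complex.exp_ne_zero _) h₃)]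
  push_cast
  simp only [Complex.cosh, Complex.cos, Complex.exp_add, Complex.exp_neg, sub_mul, neg_mul,
    one_mul, Complex.exp_sub]
  field_simp
  ring_nf

lemma Complex.norm_one_add_exp_I_mul_sq (θ : ℝ) :
    ‖1 + cexp (I * θ)‖ ^ 2 = 2 * (1 + Real.cos θ) := by
  rw [mul_comm, Complex.exp_mul_I, ← Complex.ofReal_cos, ← Complex.ofReal_sin,
    ← Complex.ofReal_one, ← add_assoc, ← Complex.ofReal_add, Complex.norm_add_mul_I,
    Real.sq_sqrt (by positivity)]
  nlinarith [Real.sin_sq_add_cos_sq θ]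

lemma Complex.norm_one_add_exp_I_mul_le (θ : ℝ) : ‖1 + cexp (I * θ)‖ ≤ 2 := by
  refine (norm_add_le _ _).trans ?_
  rw [norm_one, Complex.norm_exp]
  norm_num

lemma Real.cosh_eq_one_add_two_mul_sinh_half_sq (x : ℝ) :
    Real.cosh x = 1 + 2 * Real.sinh (x / 2) ^ 2 := by
  have h := Real.cosh_two_mul (x / 2)
  rw [mul_div_cancel₀ x two_ne_zero, Real.cosh_sq] at h
  linarith

lemma Real.cosh_add_cos_eq (s θ : ℝ) :
    Real.cosh s + Real.cos θ = 2 * Real.sinh (s / 2) ^ 2 + ‖1 + cexp (I * θ)‖ ^ 2 / 2 := by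
  rw [Complex.norm_one_add_exp_I_mul_sq, Real.cosh_eq_one_add_two_mul_sinh_half_sq]
  ring

lemma Real.cosh_le_exp {x : ℝ} (hx : 0 ≤ x) : Real.cosh x ≤ Real.exp x := by
  rw [Real.cosh_eq]
  linarith [Real.exp_le_exp.2 (neg_le_self hx)]

lemma Real.sinh_mul_le_exp_mul_sinh {β u : ℝ} (hβ : β ≤ 1) (hu : 0 ≤ u) :
    Real.sinh (β * u) ≤ Real.exp ((β - 1) * u) * Real.sinh u := by
  have : Real.exp ((β - 2) * u) ≤ Real.exp (-(β * u)) := Real.exp_le_exp.2 (by nlinarith)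
  rw [Real.sinh_eq, Real.sinh_eq, mul_div_assoc', mul_sub, ← Real.exp_add, ← Real.exp_add]
  ring_nf at this ⊢
  linarith

lemma Real.abs_cosh_sub_cosh_le {α s : ℝ} (hα₀ : 0 ≤ α) (hα₁ : α ≤ 1) (hs : 0 ≤ s) :
    |Real.cosh (α * s) - Real.cosh ((1 - α) * s)|
      ≤ Real.exp (-((1 - |2 * α - 1|) / 2) * s) * (2 * Real.sinh (s / 2) ^ 2) := by
  have hs2 : 0 ≤ s / 2 := by linarith
  have hdiff : Real.cosh (α * s) - Real.cosh ((1 - α) * s)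
      = 2 * Real.sinh (s / 2) * Real.sinh ((2 * α - 1) * (s / 2)) := by
    rw [show α * s = s / 2 + (2 * α - 1) * (s / 2) by ring,
      show (1 - α) * s = s / 2 - (2 * α - 1) * (s / 2) by ring, Real.cosh_add, Real.cosh_sub]
    ring
  have key := Real.sinh_mul_le_exp_mul_sinh (β := |2 * α - 1|)
    (abs_le.2 ⟨by linarith, by linarith⟩) hs2
  calc |Real.cosh (α * s) - Real.cosh ((1 - α) * s)|
      = 2 * Real.sinh (s / 2) * Real.sinh (|2 * α - 1| * (s / 2)) := by
        rw [hdiff, abs_mul, Real.abs_sinh, abs_mul (2 * α - 1), abs_of_nonneg hs2,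
          abs_of_nonneg (by positivity)]
    _ ≤ 2 * Real.sinh (s / 2)
          * (Real.exp ((|2 * α - 1| - 1) * (s / 2)) * Real.sinh (s / 2)) := by
        gcongr
    _ = _ := by ring_nf

lemma norm_one_add_exp_mul_cosh_div_le {α s : ℝ} (hα₀ : 0 ≤ α) (hα₁ : α ≤ 1) (hs : 0 < s)
    (θ : ℝ) :
    ‖1 + cexp (I * θ)‖ * Real.cosh ((1 - α) * s) / (Real.cosh s + Real.cos θ)
      ≤ 4 * Real.exp (-α * s)
        + 2 * (‖1 + cexp (I * θ)‖ / (s ^ 2 + ‖1 + cexp (I * θ)‖ ^ 2)) := by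
  set b := ‖1 + cexp (I * θ)‖
  set B := Real.cosh ((1 - α) * s)
  set D := Real.cosh s + Real.cos θ
  set e := Real.exp (-α * s)
  have hb₀ : 0 ≤ b := norm_nonneg _
  have hb₂ : b ≤ 2 := Complex.norm_one_add_exp_I_mul_le θ
  have hD : D = 2 * Real.sinh (s / 2) ^ 2 + b ^ 2 / 2 := Real.cosh_add_cos_eq s θ
  have hsinh : s / 2 ≤ Real.sinh (s / 2) := Real.self_le_sinh_iff.2 (by linarith)
  have hD_ge : (s ^ 2 + b ^ 2) / 2 ≤ D := by nlinarith
  have hD_pos : 0 < D := by nlinarith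
  have hcosh := Real.cosh_eq_one_add_two_mul_sinh_half_sq s
  have hB_le : B ≤ Real.cosh s := Real.cosh_le_cosh.2 (by
    rw [abs_mul, abs_of_nonneg hs.le, abs_of_nonneg (by linarith)]; nlinarith)
  have hB_le_exp : B ≤ 2 * e * Real.cosh s := calc
    B ≤ Real.exp ((1 - α) * s) := Real.cosh_le_exp (by nlinarith)
    _ = e * Real.exp s := by rw [← Real.exp_add]; ring_nf
    _ ≤ e * (2 * Real.cosh s) := by
        gcongr
        rw [Real.cosh_eq]
        linarith [Real.exp_pos (-s)]
    _ = 2 * e * Real.cosh s := by ring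
  -- after multiplying by `cosh s`, use `B ≤ cosh s` against `b` and `B ≤ 2 e cosh s` against `D`
  have hnum : b * B ≤ 4 * e * D + b := by
    have hbc : b * Real.cosh s ≤ b + 2 * D := by nlinarith
    refine le_of_mul_le_mul_right ?_ (Real.cosh_pos s)
    nlinarith [mul_le_mul_of_nonneg_left hbc (Real.cosh_pos ((1 - α) * s)).le]
  calc b * B / D ≤ (4 * e * D + b) / D := by gcongr
    _ = 4 * e + b / D := by field_simp
    _ ≤ 4 * e + b / ((s ^ 2 + b ^ 2) / 2) := by gcongr
    _ = _ := by rw [div_div_eq_mul_div]; ring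

lemma norm_integrand_le {α θ s : ℝ} (hα₀ : 0 ≤ α) (hα₁ : α ≤ 1) (hs : 0 < s) :
    ‖cexp (-(α:ℂ) * s) / (1 + cexp (-(s:ℂ) + I * θ))
        + cexp ((α:ℂ) * s) / (1 + cexp ((s:ℂ) + I * θ))‖
      ≤ Real.exp (-((1 - |2 * α - 1|) / 2) * s) + 4 * Real.exp (-α * s)
        + 2 * (‖1 + cexp (I * θ)‖ / (s ^ 2 + ‖1 + cexp (I * θ)‖ ^ 2)) := by
  set A := Real.cosh (α * s)
  set B := Real.cosh ((1 - α) * s)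
  set D := Real.cosh s + Real.cos θ
  set w := cexp (I * θ)
  have hD : D = 2 * Real.sinh (s / 2) ^ 2 + ‖1 + w‖ ^ 2 / 2 := Real.cosh_add_cos_eq s θ
  have hD_pos : 0 < D := by
    rw [hD]
    have := Real.sinh_pos_iff.2 (half_pos hs)
    positivity
  have hw : ‖w‖ = 1 := by simp [w, Complex.norm_exp]
  have hsplit : ‖(A : ℂ) + w * B‖ ≤ |A - B| + ‖1 + w‖ * B := by
    calc ‖(A : ℂ) + w * B‖ = ‖((A - B : ℝ) : ℂ) + (1 + w) * (B : ℂ)‖ := by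
          push_cast; ring_nf
      _ ≤ ‖((A - B : ℝ) : ℂ)‖ + ‖(1 + w) * (B : ℂ)‖ := norm_add_le _ _
      _ = |A - B| + ‖1 + w‖ * B := by
        rw [norm_mul, Complex.norm_real, Complex.norm_real, Real.norm_eq_abs, Real.norm_eq_abs,
          abs_of_pos (Real.cosh_pos _)]
  have hdiff : |A - B| / D ≤ Real.exp (-((1 - |2 * α - 1|) / 2) * s) :=
    div_le_of_le_mul₀ hD_pos.le (Real.exp_pos _).le <|
      (Real.abs_cosh_sub_cosh_le hα₀ hα₁ hs.le).trans (by gcongr; nlinarith)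
  rw [integrand_eq_cosh_div α θ hs.ne', norm_div, norm_mul, hw, one_mul, Complex.norm_real,
    Real.norm_eq_abs, abs_of_pos hD_pos]
  calc ‖(A : ℂ) + w * B‖ / D ≤ (|A - B| + ‖1 + w‖ * B) / D := by gcongr
    _ = |A - B| / D + ‖1 + w‖ * B / D := add_div _ _ _
    _ ≤ _ := by
      rw [add_assoc]
      exact add_le_add hdiff (norm_one_add_exp_mul_cosh_div_le hα₀ hα₁ hs θ)

lemma integral_exp_neg_mul_Ioi_zero {c : ℝ} (hc : 0 < c) :
    ∫ s in Ioi (0 : ℝ), Real.exp (-c * s) = 1 / c := by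
  rw [integral_exp_mul_Ioi (neg_neg_of_pos hc), mul_zero, Real.exp_zero, neg_div_neg_eq]

lemma hasDerivAt_arctan_div {b : ℝ} (hb : b ≠ 0) (x : ℝ) :
    HasDerivAt (fun s => Real.arctan (s / b)) (b / (x ^ 2 + b ^ 2)) x := by
  refine ((Real.hasDerivAt_arctan (x / b)).comp x ((hasDerivAt_id x).div_const b)).congr_deriv ?_
  field_simp
  ring

lemma tendsto_arctan_div_atTop {b : ℝ} (hb : 0 < b) :
    Tendsto (fun s => Real.arctan (s / b)) atTop (𝓝 (π / 2)) :=
  (Real.tendsto_arctan_atTop.mono_right nhdsWithin_le_nhds).comp (tendsto_id.atTop_div_const hb)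

lemma integrableOn_Ioi_div_sq_add_sq {b : ℝ} (hb : 0 ≤ b) :
    IntegrableOn (fun s : ℝ => b / (s ^ 2 + b ^ 2)) (Ioi 0) := by
  rcases hb.eq_or_lt with rfl | hb
  · simp
  exact integrableOn_Ioi_deriv_of_nonneg' (fun x _ => hasDerivAt_arctan_div hb.ne' x)
    (fun x _ => by positivity) (tendsto_arctan_div_atTop hb)

lemma integral_Ioi_div_sq_add_sq_le {b : ℝ} (hb : 0 ≤ b) :
    ∫ s in Ioi (0 : ℝ), b / (s ^ 2 + b ^ 2) ≤ π / 2 := by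
  rcases hb.eq_or_lt with rfl | hb
  · simp only [zero_div, integral_zero]
    positivity
  rw [integral_Ioi_of_hasDerivAt_of_nonneg' (fun x _ => hasDerivAt_arctan_div hb.ne' x)
    (fun x _ => by positivity) (tendsto_arctan_div_atTop hb)]
  simp

theorem stmt_5 (α : ℝ) (hα : α ∈ Set.Ioo (0:ℝ) 1) :
    ∃ C : ℝ, 0 < C ∧ ∀ θ : ℝ,
      (∫ s in Set.Ioi (0:ℝ),
        ‖Complex.exp (-(α:ℂ) * s) / (1 + Complex.exp (-(s:ℂ) + Complex.I * θ)) +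
          Complex.exp ((α:ℂ) * s) / (1 + Complex.exp ((s:ℂ) + Complex.I * θ))‖) ≤ C := by
  obtain ⟨hα₀, hα₁⟩ := hα
  set γ := (1 - |2 * α - 1|) / 2
  have hγ : 0 < γ := by
    have := abs_lt.2 (⟨by linarith, by linarith⟩ : -1 < 2 * α - 1 ∧ 2 * α - 1 < 1)
    simp only [γ]; linarith
  refine ⟨1 / γ + 4 / α + π, by positivity, fun θ => ?_⟩
  set b := ‖1 + cexp (I * θ)‖
  have hb : 0 ≤ b := norm_nonneg _
  have h₁ := exp_neg_integrableOn_Ioi 0 hγ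
  have h₂ := (exp_neg_integrableOn_Ioi 0 hα₀).const_mul 4
  have h₃ := (integrableOn_Ioi_div_sq_add_sq hb).const_mul 2
  have h₁₂ : IntegrableOn (fun s => Real.exp (-γ * s) + 4 * Real.exp (-α * s)) (Ioi 0) :=
    h₁.add h₂
  have h₁₂₃ : IntegrableOn (fun s => Real.exp (-γ * s) + 4 * Real.exp (-α * s)
      + 2 * (b / (s ^ 2 + b ^ 2))) (Ioi 0) := h₁₂.add h₃
  calc _ ≤ ∫ s in Ioi (0 : ℝ),
          (Real.exp (-γ * s) + 4 * Real.exp (-α * s) + 2 * (b / (s ^ 2 + b ^ 2))) :=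
        integral_mono_of_nonneg (ae_of_all _ fun _ => norm_nonneg _) h₁₂₃
          ((ae_restrict_iff' measurableSet_Ioi).2
            (ae_of_all _ fun _ hs => norm_integrand_le hα₀.le hα₁.le hs))
    _ = 1 / γ + 4 / α + 2 * ∫ s in Ioi (0 : ℝ), b / (s ^ 2 + b ^ 2) := by
        rw [integral_add h₁₂ h₃, integral_add h₁ h₂, integral_const_mul, integral_const_mul,
          integral_exp_neg_mul_Ioi_zero hγ, integral_exp_neg_mul_Ioi_zero hα₀, mul_one_div]
    _ ≤ 1 / γ + 4 / α + π := by linarith [integral_Ioi_div_sq_add_sq_le hb]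
end

section
/- For α ∈ (0,1), θ ∈ ℝ, and s ∈ ℝ with 1 + e^{s+iθ} ≠ 0, the symmetric sum ∑_{j∈ℤ} e^{-2πiαj} ( 1/((θ+2jπ)+π−is) − 1/((θ+2jπ)−π−is) ) equals 2 sin(πα) · e^{α(s+iθ)}/(1 + e^{s+iθ}). -/
/-!
For `a b : ℂ` with `exp (I a) = exp (I b) ≠ 1`, the `1`-periodic extension of
`x ↦ I (exp (I a x) - exp (I b x)) / (exp (I a) - 1)` from `[0, 1)` is continuous, because the
jumps of the two exponentials at the endpoints cancel. Its `n`-th Fourier coefficient is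
`1 / (a - 2πn) - 1 / (b - 2πn) = O(n⁻²)`, so its Fourier series converges absolutely to it at
every point. The theorem is the case `a, b = θ ± π - I s`, `x = α`, reindexed by `n = -j`;
then `exp (I a) = exp (I b) = -exp (s + I θ)`.
-/

open Real Complex Filter MeasureTheory

theorem fourierCoeffOn_sub {E : Type*} [NormedAddCommGroup E] [NormedSpace ℂ E] [CompleteSpace E]
    {a b : ℝ} (hab : a < b) {f g : ℝ → E} (hf : IntervalIntegrable f volume a b)
    (hg : IntervalIntegrable g volume a b) (n : ℤ) :
    fourierCoeffOn hab (fun x => f x - g x) n =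
      fourierCoeffOn hab f n - fourierCoeffOn hab g n := by
  have : Fact (0 < b - a) := ⟨sub_pos.2 hab⟩
  have hfourier :
      ContinuousOn (fun x : ℝ => fourier (-n) (x : AddCircle (b - a))) (Set.uIcc a b) :=
    ((map_continuous _).comp (AddCircle.continuous_mk' _)).continuousOn
  simp only [fourierCoeffOn_eq_integral, smul_sub]
  rw [intervalIntegral.integral_sub (hf.continuousOn_smul hfourier) (hg.continuousOn_smul hfourier),
    smul_sub]

theorem sub_two_pi_mul_intCast_ne_zero {a : ℂ} (ha : cexp (I * a) ≠ 1) (n : ℤ) :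
    a - 2 * π * n ≠ 0 := by
  intro h
  exact ha (Complex.exp_eq_one_iff.2 ⟨n, by linear_combination I * h⟩)

theorem fourierCoeffOn_cexp_I_mul {a : ℂ} {n : ℤ} (hn : a - 2 * π * n ≠ 0) :
    fourierCoeffOn (zero_lt_one' ℝ) (fun x : ℝ => cexp (I * a * x)) n =
      I * (1 - cexp (I * a)) / (a - 2 * π * n) := by
  have hexponent : ∀ x : ℝ, 2 * π * I * (-n : ℤ) * x / (1 - 0 : ℝ) + I * a * x =
      I * (a - 2 * π * n) * x := fun x => by push_cast; ring
  have hperiod : cexp (I * (a - 2 * π * n)) = cexp (I * a) := by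
    rw [show I * (a - 2 * π * n) = I * a + (-n : ℤ) * (2 * π * I) by push_cast; ring,
      Complex.exp_add, exp_int_mul_two_pi_mul_I, mul_one]
  simp_rw [fourierCoeffOn_eq_integral, fourier_coe_apply, smul_eq_mul, ← Complex.exp_add,
    hexponent]
  rw [integral_exp_mul_complex (mul_ne_zero I_ne_zero hn)]
  simp only [ofReal_one, ofReal_zero, mul_one, mul_zero, Complex.exp_zero, hperiod, sub_zero,
    div_one, one_smul]
  field_simp
  linear_combination (cexp (I * a) - 1) * I_sq

theorem isBigO_inv_sub_two_pi_mul_intCast (a : ℂ) :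
    (fun n : ℤ => (a - 2 * π * n)⁻¹) =O[cofinite] fun n => (n : ℝ)⁻¹ := by
  refine ((EisensteinSeries.linear_inv_isBigO_right 1 (-a / (2 * π))).const_mul_left
    (-(2 * π : ℂ)⁻¹)).congr_left fun n => ?_
  have : (2 * π : ℂ) ≠ 0 := by exact_mod_cast two_pi_pos.ne'
  rw [show (1 : ℤ) * (-a / (2 * π)) + n = -((a - 2 * π * n) / (2 * π)) by
    push_cast; field_simp; ring, inv_neg, inv_div]
  field_simp

theorem summable_inv_sub_two_pi_mul_sub_inv {a b : ℂ} (ha : ∀ n : ℤ, a - 2 * π * n ≠ 0)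
    (hb : ∀ n : ℤ, b - 2 * π * n ≠ 0) :
    Summable fun n : ℤ => (a - 2 * π * n)⁻¹ - (b - 2 * π * n)⁻¹ := by
  have hprod : Summable fun n : ℤ => ((a - 2 * π * n) * (b - 2 * π * n))⁻¹ := by
    apply EisensteinSeries.summable_inv_of_isBigO_rpow_inv one_lt_two
    simp only [Real.rpow_two, abs_mul_abs_self, pow_two, mul_inv]
    exact (isBigO_inv_sub_two_pi_mul_intCast a).mul (isBigO_inv_sub_two_pi_mul_intCast b)
  refine (hprod.mul_left (b - a)).congr fun n => ?_
  rw [inv_sub_inv' (ha n) (hb n), mul_inv]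
  ring

theorem hasSum_fourierSeries_cexp_I_mul_sub {a b : ℂ} (hab : cexp (I * a) = cexp (I * b))
    (ha : cexp (I * a) ≠ 1) {x : ℝ} (hx : x ∈ Set.Ico (0 : ℝ) 1) :
    HasSum
      (fun n : ℤ => ((a - 2 * π * n)⁻¹ - (b - 2 * π * n)⁻¹) * cexp (2 * π * I * n * x))
      (I * (cexp (I * a * x) - cexp (I * b * x)) / (cexp (I * a) - 1)) := by
  have ha' := sub_two_pi_mul_intCast_ne_zero ha
  have hb' := sub_two_pi_mul_intCast_ne_zero (hab ▸ ha)
  have hw : cexp (I * a) - 1 ≠ 0 := sub_ne_zero.2 ha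
  set g : ℝ → ℂ := fun x => I / (cexp (I * a) - 1) * (cexp (I * a * x) - cexp (I * b * x))
  have hnormalize : I / (cexp (I * a) - 1) * (I * (1 - cexp (I * a))) = 1 := by
    rw [div_mul_eq_mul_div, div_eq_one_iff_eq hw]
    linear_combination (1 - cexp (I * a)) * I_sq
  have hg : g 0 = g (0 + 1) := by simp [g, hab]
  let F : C(AddCircle (1 : ℝ), ℂ) :=
    ⟨AddCircle.liftIco 1 0 g, AddCircle.liftIco_continuous hg (by fun_prop)⟩
  have hF : fourierCoeff F = fun n : ℤ => (a - 2 * π * n)⁻¹ - (b - 2 * π * n)⁻¹ := by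
    ext n
    have hexp : ∀ c : ℂ, IntervalIntegrable (fun x : ℝ => cexp (c * x)) volume 0 1 :=
      fun c => (by fun_prop : Continuous fun x : ℝ => cexp (c * x)).intervalIntegrable 0 1
    rw [ContinuousMap.coe_mk, fourierCoeff_liftIco_eq]
    simp only [zero_add, g]
    rw [fourierCoeffOn.const_mul, fourierCoeffOn_sub _ (hexp _) (hexp _),
      fourierCoeffOn_cexp_I_mul (ha' n), fourierCoeffOn_cexp_I_mul (hb' n), ← hab]
    linear_combination ((a - 2 * π * n)⁻¹ - (b - 2 * π * n)⁻¹) * hnormalize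
  have hsum := has_pointwise_sum_fourier_series_of_summable
    (hF ▸ summable_inv_sub_two_pi_mul_sub_inv ha' hb') (x : AddCircle (1 : ℝ))
  rw [hF, ContinuousMap.coe_mk, AddCircle.liftIco_zero_coe_apply hx] at hsum
  convert hsum using 1
  · ext n
    simp
  · simp only [g]; ring

theorem cexp_add_pi_mul_I_sub_div_eq_sin_mul (z : ℂ) (t : ℝ) (hz : 1 + cexp z ≠ 0) :
    I * (cexp ((z + π * I) * t) - cexp ((z - π * I) * t)) / (cexp (z + π * I) - 1) =
      2 * Real.sin (π * t) * cexp (t * z) / (1 + cexp z) := by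
  have hz' : -cexp z - 1 ≠ 0 := fun h => hz (by linear_combination -h)
  rw [exp_add_pi_mul_I, show (z + π * I) * t = t * z + π * t * I by ring,
    show (z - π * I) * t = t * z + -(π * t * I) by ring, Complex.exp_add, Complex.exp_add,
    ofReal_sin, Complex.sin, div_eq_div_iff hz' hz]
  push_cast
  ring_nf

theorem stmt_9 (α θ s : ℝ) (hα : α ∈ Set.Ioo (0:ℝ) 1)
    (h : 1 + Complex.exp ((s:ℂ) + Complex.I * θ) ≠ 0) :
    Tendsto
      (fun N : ℕ => ∑ j ∈ Finset.Icc (-(N:ℤ)) (N:ℤ),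
        Complex.exp (-2 * π * Complex.I * α * (j:ℂ)) *
          (1 / (((θ:ℂ) + 2 * (j:ℂ) * π) + π - Complex.I * s) -
           1 / (((θ:ℂ) + 2 * (j:ℂ) * π) - π - Complex.I * s)))
      atTop
      (nhds (2 * Real.sin (π * α) *
        Complex.exp ((α:ℂ) * ((s:ℂ) + Complex.I * θ)) /
          (1 + Complex.exp ((s:ℂ) + Complex.I * θ)))) := by
  set z : ℂ := s + I * θ
  have hplus : I * (θ + π - I * s) = z + π * I := by linear_combination (-(s : ℂ)) * I_sq
  have hminus : I * (θ - π - I * s) = z - π * I := by linear_combination (-(s : ℂ)) * I_sq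
  have hsum := hasSum_fourierSeries_cexp_I_mul_sub (a := θ + π - I * s) (b := θ - π - I * s)
    (by rw [hplus, hminus, exp_add_pi_mul_I, exp_sub_pi_mul_I])
    (by rw [hplus, exp_add_pi_mul_I]; exact fun h1 => h (by linear_combination -h1))
    (Set.Ioo_subset_Ico_self hα)
  rw [hplus, hminus, cexp_add_pi_mul_I_sub_div_eq_sin_mul z α h,
    ← (Equiv.neg ℤ).hasSum_iff] at hsum
  refine (hsum.comp Finset.tendsto_Icc_neg).congr fun N => Finset.sum_congr rfl fun j _ => ?_
  simp only [Function.comp_apply, Equiv.neg_apply, Int.cast_neg, one_div]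
  ring_nf
end

section
/- For α > 0 and m, n ∈ ℕ, ∫_0^∞ x^α e^{-x} L_m^α(x) L_n^α(x) dx = (Γ(n+α+1)/n!) δ_{n,m}, where L_m^α is the generalized Laguerre polynomial L_m^α(x) = ∑_{k=0}^m (−1)^k binom(m+α, m−k) x^k/k!. -/
open Real MeasureTheory

/-- Generalized Laguerre polynomial `L_m^α`, with generalized binomial coefficient
`binom(m+α, m−k) = Γ(m+α+1)/(Γ(k+α+1)(m−k)!)`. -/
noncomputable def genLaguerre (α : ℝ) (m : ℕ) (x : ℝ) : ℝ :=
  ∑ k ∈ Finset.range (m + 1),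
    (-1 : ℝ) ^ k * (Real.Gamma ((m : ℝ) + α + 1) /
      (Real.Gamma ((k : ℝ) + α + 1) * ((m - k).factorial : ℝ))) * x ^ k /
      (k.factorial : ℝ)

/-!
Expanding `L_m^α` in monomials and integrating termwise against `x^α e^{-x}` turns every integral
into Gamma values: `∫ x^(α+j) e^{-x} L_n^α(x) dx = ∑_k c_{n,k} Γ(α+j+k+1)`. Since
`Γ(α+j+k+1) = Γ(α+k+1) (α+k+1)_j` with `(·)_j` the rising factorial, this sum is `Γ(n+α+1)/n!`
times an `n`-th alternating binomial sum of a polynomial of degree `j` in `k`, that is `(-1)^n`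
times its `n`-th forward difference at `0`. This vanishes for `j < n` and equals `n!` for `j = n`,
the polynomial being monic. So `L_n^α` is orthogonal to all monomials of degree `< n`, and for
`m = n` only the leading coefficient `(-1)^n/n!` of `L_m^α` contributes.
-/

open Finset Polynomial Nat Set

theorem Polynomial.sum_range_neg_one_pow_mul_choose_mul_eval {R : Type*} [CommRing R]
    {P : R[X]} {n : ℕ} (hP : P.natDegree ≤ n) :
    ∑ k ∈ range (n + 1), (-1) ^ k * n.choose k * P.eval (k : R) = (-1) ^ n * n ! * P.coeff n := by
  have hΔ : (fwdDiff 1)^[n] P.eval (0 : R) = n ! * P.coeff n := by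
    rcases hP.lt_or_eq with hlt | rfl
    · simp [fwdDiff_iter_eq_zero_of_degree_lt hlt, coeff_eq_zero_of_natDegree_lt hlt]
    · simp [fwdDiff_iter_degree_eq_factorial, mul_comm]
  rw [fwdDiff_iter_eq_sum_shift] at hΔ
  rw [mul_assoc, ← hΔ, mul_sum]
  refine sum_congr rfl fun k hk ↦ ?_
  obtain ⟨d, rfl⟩ := Nat.exists_eq_add_of_le (mem_range_succ_iff.mp hk)
  simp only [zsmul_eq_mul, nsmul_eq_mul, zero_add, mul_one, Nat.add_sub_cancel_left, pow_add]
  push_cast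
  ring_nf
  rw [pow_mul', neg_one_sq, one_pow, mul_one]

theorem Real.Gamma_add_nat_eq_mul_ascPochhammer {s : ℝ} (hs : 0 < s) (n : ℕ) :
    Gamma (s + n) = Gamma s * (ascPochhammer ℝ n).eval s := by
  induction n with
  | zero => simp
  | succ n ih =>
    rw [Nat.cast_succ, ← add_assoc, Gamma_add_one (by positivity), ih, ascPochhammer_succ_right]
    simp only [eval_mul, eval_add, eval_X, eval_natCast]
    ring

noncomputable def laguerreCoeff (α : ℝ) (m k : ℕ) : ℝ :=
  (-1) ^ k * (Gamma (m + α + 1) / (Gamma (k + α + 1) * (m - k)!)) / k !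

theorem genLaguerre_eq_sum (α : ℝ) (m : ℕ) (x : ℝ) :
    genLaguerre α m x = ∑ k ∈ range (m + 1), laguerreCoeff α m k * x ^ k :=
  sum_congr rfl fun k _ ↦ by rw [laguerreCoeff]; ring

theorem laguerreCoeff_self {α : ℝ} (hα : -1 < α) (m : ℕ) :
    laguerreCoeff α m m = (-1) ^ m / m ! := by
  have : Gamma (m + α + 1) ≠ 0 := (Gamma_pos_of_pos (by linarith [m.cast_nonneg (α := ℝ)])).ne'
  simp [laguerreCoeff, this]

theorem sum_laguerreCoeff_mul_Gamma {α : ℝ} (hα : -1 < α) {j n : ℕ} (hj : j ≤ n) :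
    ∑ k ∈ range (n + 1), laguerreCoeff α n k * Gamma (α + j + k + 1) =
      if j = n then (-1) ^ n * Gamma (n + α + 1) else 0 := by
  set P : ℝ[X] := (ascPochhammer ℝ j).comp (X + C (α + 1))
  have hP : P.natDegree = j := by
    rw [natDegree_comp, ascPochhammer_natDegree, natDegree_X_add_C, mul_one]
  have hterm : ∀ k ∈ range (n + 1), laguerreCoeff α n k * Gamma (α + j + k + 1) =
      Gamma (n + α + 1) / n ! * ((-1) ^ k * n.choose k * P.eval (k : ℝ)) := by
    intro k hk
    have hk0 : 0 < (k : ℝ) + α + 1 := by linarith [k.cast_nonneg (α := ℝ)]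
    have hkn : k ≤ n := mem_range_succ_iff.mp hk
    have hΓ : Gamma (α + j + k + 1) = Gamma (k + α + 1) * P.eval (k : ℝ) := by
      rw [show α + j + k + 1 = (k + α + 1) + j by ring,
        Gamma_add_nat_eq_mul_ascPochhammer hk0]
      simp [P, eval_comp, add_assoc]
    have : Gamma (k + α + 1) ≠ 0 := (Gamma_pos_of_pos hk0).ne'
    rw [hΓ, laguerreCoeff, Nat.cast_choose ℝ hkn]
    field_simp
  rw [sum_congr rfl hterm, ← mul_sum, sum_range_neg_one_pow_mul_choose_mul_eval (hP.trans_le hj)]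
  split_ifs with hjn
  · subst hjn
    have hmonic : P.Monic := (monic_ascPochhammer ℝ j).comp_X_add_C (α + 1)
    rw [← hP, hmonic.coeff_natDegree, hP]
    field_simp
  · rw [coeff_eq_zero_of_natDegree_lt (hP ▸ lt_of_le_of_ne hj hjn), mul_zero, mul_zero]

theorem integrableOn_rpow_mul_exp_neg {β : ℝ} (hβ : -1 < β) :
    IntegrableOn (fun x : ℝ ↦ x ^ β * exp (-x)) (Ioi 0) := by
  simpa [mul_comm] using GammaIntegral_convergent (s := β + 1) (by linarith)

theorem integral_rpow_mul_exp_neg {β : ℝ} (hβ : -1 < β) :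
    ∫ x in Ioi 0, x ^ β * exp (-x) = Gamma (β + 1) := by
  simpa [mul_comm] using (Gamma_eq_integral (s := β + 1) (by linarith)).symm

theorem rpow_mul_exp_neg_mul_sum {x : ℝ} (hx : 0 < x) (β : ℝ) (s : Finset ℕ) (c : ℕ → ℝ) :
    x ^ β * exp (-x) * ∑ k ∈ s, c k * x ^ k = ∑ k ∈ s, c k * (x ^ (β + k) * exp (-x)) := by
  rw [mul_sum]
  refine sum_congr rfl fun k _ ↦ ?_
  rw [rpow_add hx, rpow_natCast]
  ring

theorem integrableOn_rpow_mul_exp_neg_mul_sum {β : ℝ} (hβ : -1 < β) (s : Finset ℕ) (c : ℕ → ℝ) :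
    IntegrableOn (fun x ↦ x ^ β * exp (-x) * ∑ k ∈ s, c k * x ^ k) (Ioi 0) := by
  refine IntegrableOn.congr_fun (integrable_finsetSum s fun k _ ↦ ?_)
    (fun x hx ↦ (rpow_mul_exp_neg_mul_sum hx β s c).symm) measurableSet_Ioi
  exact (integrableOn_rpow_mul_exp_neg (by linarith [k.cast_nonneg (α := ℝ)])).const_mul (c k)

theorem integral_rpow_mul_exp_neg_mul_sum {β : ℝ} (hβ : -1 < β) (s : Finset ℕ) (c : ℕ → ℝ) :
    ∫ x in Ioi 0, x ^ β * exp (-x) * ∑ k ∈ s, c k * x ^ k = ∑ k ∈ s, c k * Gamma (β + k + 1) := by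
  have hk : ∀ k : ℕ, -1 < β + k := fun k ↦ by linarith [k.cast_nonneg (α := ℝ)]
  rw [setIntegral_congr_fun measurableSet_Ioi fun x hx ↦ rpow_mul_exp_neg_mul_sum hx β s c,
    integral_finsetSum s fun k _ ↦ (integrableOn_rpow_mul_exp_neg (hk k)).const_mul (c k)]
  refine sum_congr rfl fun k _ ↦ ?_
  rw [integral_const_mul, integral_rpow_mul_exp_neg (hk k)]

theorem integral_genLaguerre_mul_genLaguerre_of_le {α : ℝ} (hα : -1 < α) {m n : ℕ} (h : m ≤ n) :
    ∫ x in Ioi 0, x ^ α * exp (-x) * genLaguerre α m x * genLaguerre α n x =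
      Gamma (n + α + 1) / n ! * if n = m then 1 else 0 := by
  have hαj : ∀ j : ℕ, -1 < α + j := fun j ↦ by linarith [j.cast_nonneg (α := ℝ)]
  have hsplit : EqOn (fun x ↦ x ^ α * exp (-x) * genLaguerre α m x * genLaguerre α n x)
      (fun x ↦ ∑ j ∈ range (m + 1), laguerreCoeff α m j *
        (x ^ (α + j) * exp (-x) * ∑ k ∈ range (n + 1), laguerreCoeff α n k * x ^ k)) (Ioi 0) := by
    intro x hx
    dsimp only
    rw [genLaguerre_eq_sum α m, rpow_mul_exp_neg_mul_sum hx, sum_mul, genLaguerre_eq_sum α n]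
    exact sum_congr rfl fun j _ ↦ by ring
  rw [setIntegral_congr_fun measurableSet_Ioi hsplit, integral_finsetSum _ fun j _ ↦
    (integrableOn_rpow_mul_exp_neg_mul_sum (hαj j) _ _).const_mul _]
  simp_rw [integral_const_mul, integral_rpow_mul_exp_neg_mul_sum (hαj _)]
  rw [sum_congr rfl fun j hj ↦ by
    rw [sum_laguerreCoeff_mul_Gamma hα ((mem_range_succ_iff.mp hj).trans h)]]
  simp only [mul_ite, mul_zero]
  rcases h.eq_or_lt with rfl | hlt
  · rw [sum_ite_eq', if_pos (self_mem_range_succ m), if_pos rfl, laguerreCoeff_self hα,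
      div_mul_eq_mul_div, ← mul_assoc, ← mul_pow, neg_one_mul, neg_neg, one_pow, one_mul, mul_one]
  · rw [if_neg hlt.ne']
    exact sum_eq_zero fun j hj ↦ if_neg ((mem_range_succ_iff.mp hj).trans_lt hlt).ne

theorem stmt_13 (α : ℝ) (hα : 0 < α) (m n : ℕ) :
    ∫ x in Set.Ioi (0:ℝ),
        x ^ α * Real.exp (-x) * genLaguerre α m x * genLaguerre α n x =
      Real.Gamma ((n : ℝ) + α + 1) / (n.factorial : ℝ) * (if n = m then 1 else 0) := by
  have hα' : -1 < α := by linarith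
  rcases le_total m n with h | h
  · exact integral_genLaguerre_mul_genLaguerre_of_le hα' h
  · have hswap := integral_genLaguerre_mul_genLaguerre_of_le hα' h
    simp_rw [mul_right_comm _ (genLaguerre α n _)] at hswap
    rw [hswap]
    rcases eq_or_ne n m with rfl | hnm
    · rfl
    · rw [if_neg hnm.symm, if_neg hnm, mul_zero, mul_zero]
end

section
/- Let α ∈ (0,1), B₀ > 0. In polar coordinates on ℝ²∖{0}, the functions V_{k,m}(r,θ) = r^{|k+α|} e^{-B₀r²/4} P_{k,m}(B₀r²/2) e^{ikθ} satisfy (−∂_r² − (1/r)∂_r + (1/r²)(−i∂_θ + α + B₀r²/2)²) V_{k,m} = λ_{k,m} V_{k,m} with λ_{k,m} = (2m+1+|k+α|)B₀ + (k+α)B₀, for every k ∈ ℤ and m ∈ ℕ. -/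
/-!
Write `V = R(r) e^{ikθ}`. On such a function `-i∂_θ + α + B₀r²/2` acts as multiplication by
`k + α + B₀r²/2`, and since `|k + α|² = (k + α)²` the equation reduces to a radial equation for
`R = Σₙ cₙ (B₀/2)ⁿ r^{β+2n} e^{-B₀r²/4}`, `β = |k + α|`, where `cₙ` are the coefficients of
`P_{k,m}`. The radial operator maps each Gaussian monomial `r^γ e^{-B₀r²/4}` to
`((γ + 1)B₀ + (β² - γ²)/r²)` times itself, so after subtracting the eigenvalue the sum
telescopes, by the recurrence `(n+1)(n+1+β) cₙ₊₁ = (n-m) cₙ` behind Kummer's equation.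
-/

open Real Complex

/-- The polynomial `P_{k,m}`. -/
noncomputable def Pkm (α : ℝ) (k : ℤ) (m : ℕ) (r : ℝ) : ℝ :=
  ∑ n ∈ Finset.range (m + 1),
    (ascPochhammer ℝ n).eval (-(m : ℝ)) /
      (ascPochhammer ℝ n).eval (1 + |(k : ℝ) + α|) * r ^ n / (n.factorial : ℝ)

/-- The eigenfunctions in polar coordinates:
`V_{k,m}(r,θ) = r^{|k+α|} e^{-B₀r²/4} P_{k,m}(B₀r²/2) e^{ikθ}`. -/
noncomputable def Vkm (B₀ α : ℝ) (k : ℤ) (m : ℕ) (r θ : ℝ) : ℂ :=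
  ((r ^ |(k : ℝ) + α| * Real.exp (-B₀ * r ^ 2 / 4) * Pkm α k m (B₀ * r ^ 2 / 2) : ℝ) : ℂ) *
    Complex.exp (Complex.I * (k : ℂ) * (θ : ℂ))

/-- The angular operator `(−i∂_θ + α + B₀r²/2)` applied to a function of `(r,θ)`. -/
noncomputable def angOp (B₀ α : ℝ) (f : ℝ → ℝ → ℂ) (r θ : ℝ) : ℂ :=
  -Complex.I * deriv (fun θ' => f r θ') θ + ((α : ℂ) + (B₀ : ℂ) * (r : ℂ) ^ 2 / 2) * f r θ

open Finset Filter Topology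

noncomputable def kummerCoeff (b : ℝ) (m n : ℕ) : ℝ :=
  (ascPochhammer ℝ n).eval (-(m : ℝ)) / (ascPochhammer ℝ n).eval b / n.factorial

noncomputable def kummerPoly (b : ℝ) (m : ℕ) (s : ℝ) : ℝ :=
  ∑ n ∈ range (m + 1), kummerCoeff b m n * s ^ n

theorem Pkm_eq_kummerPoly (α : ℝ) (k : ℤ) (m : ℕ) :
    Pkm α k m = kummerPoly (1 + |(k : ℝ) + α|) m := by
  funext s
  refine sum_congr rfl fun n _ => ?_
  rw [kummerCoeff]
  ring

theorem kummerCoeff_succ {b : ℝ} {n : ℕ} (hb : b + n ≠ 0) (m : ℕ) :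
    (n + 1) * (b + n) * kummerCoeff b m (n + 1) = (n - m) * kummerCoeff b m n := by
  -- if `(b)ₙ = 0`, both sides vanish through division by zero
  by_cases hpoch : (ascPochhammer ℝ n).eval b = 0
  · simp [kummerCoeff, ascPochhammer_succ_eval, hpoch]
  simp only [kummerCoeff, ascPochhammer_succ_eval, Nat.factorial_succ]
  push_cast
  field_simp
  ring

theorem kummerCoeff_self_add_one (b : ℝ) (m : ℕ) : kummerCoeff b m (m + 1) = 0 := by
  simp [kummerCoeff, ascPochhammer_succ_eval]

/-- Minus `s` times Kummer's equation `s P'' + (b - s) P' + m P = 0` for `P = kummerPoly b m`,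
read off coefficientwise. -/
theorem sum_kummerCoeff_mul_eq_zero {b : ℝ} (hb : ∀ n : ℕ, b + n ≠ 0) (m : ℕ) (s : ℝ) :
    ∑ n ∈ range (m + 1), kummerCoeff b m n * ((n - m) * s - n * (n - 1 + b)) * s ^ n = 0 := by
  have htel : ∀ n ∈ range (m + 1),
      kummerCoeff b m n * ((n - m) * s - n * (n - 1 + b)) * s ^ n
        = (n + 1 : ℕ) * ((n + 1 : ℕ) - 1 + b) * kummerCoeff b m (n + 1) * s ^ (n + 1)
          - n * (n - 1 + b) * kummerCoeff b m n * s ^ n := by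
    intro n _
    push_cast
    linear_combination s ^ (n + 1) * (kummerCoeff_succ (hb n) m).symm
  rw [sum_congr rfl htel,
    sum_range_sub (fun n => (n : ℝ) * (n - 1 + b) * kummerCoeff b m n * s ^ n)]
  simp [kummerCoeff_self_add_one]

noncomputable def gaussMonomial (B₀ γ r : ℝ) : ℝ :=
  r ^ γ * Real.exp (-B₀ * r ^ 2 / 4)

section GaussMonomial

variable {B₀ γ r : ℝ}

theorem gaussMonomial_add_two_mul (hr : 0 < r) (n : ℕ) :
    gaussMonomial B₀ (γ + 2 * n) r = (r ^ 2) ^ n * gaussMonomial B₀ γ r := by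
  rw [gaussMonomial, gaussMonomial, Real.rpow_add hr, ← pow_mul,
    show (2 * n : ℝ) = (2 * n : ℕ) by push_cast; ring, Real.rpow_natCast]
  ring

theorem hasDerivAt_gaussMonomial (hr : 0 < r) :
    HasDerivAt (gaussMonomial B₀ γ) ((γ / r - B₀ * r / 2) * gaussMonomial B₀ γ r) r := by
  have hpow : HasDerivAt (fun x : ℝ => x ^ γ) (γ * r ^ (γ - 1)) r :=
    Real.hasDerivAt_rpow_const (Or.inl hr.ne')
  have hexp : HasDerivAt (fun x : ℝ => Real.exp (-B₀ * x ^ 2 / 4))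
      (Real.exp (-B₀ * r ^ 2 / 4) * (-B₀ * (2 * r) / 4)) r := by
    simpa using (((hasDerivAt_pow 2 r).const_mul (-B₀)).div_const 4).exp
  refine (hpow.mul hexp).congr_deriv ?_
  rw [gaussMonomial, Real.rpow_sub hr, Real.rpow_one]
  field_simp
  ring

theorem hasDerivAt_gaussMonomial_deriv (hr : 0 < r) :
    HasDerivAt (fun x => (γ / x - B₀ * x / 2) * gaussMonomial B₀ γ x)
      (((γ / r - B₀ * r / 2) ^ 2 - γ / r ^ 2 - B₀ / 2) * gaussMonomial B₀ γ r) r := by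
  have hq : HasDerivAt (fun x => γ / x - B₀ * x / 2) (-γ / r ^ 2 - B₀ / 2) r := by
    have h := ((hasDerivAt_inv hr.ne').const_mul γ).fun_sub
      (((hasDerivAt_id r).const_mul B₀).div_const 2)
    simp only [id, mul_one, ← div_eq_mul_inv] at h
    exact h.congr_deriv (by ring)
  refine (hq.mul (hasDerivAt_gaussMonomial hr)).congr_deriv ?_
  ring

end GaussMonomial

theorem deriv_deriv_eq_of_hasDerivAt {𝕜 F : Type*} [NontriviallyNormedField 𝕜]
    [NormedAddCommGroup F] [NormedSpace 𝕜 F] {f f' : 𝕜 → F} {f'' : F} {x : 𝕜}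
    (hf : ∀ᶠ y in 𝓝 x, HasDerivAt f (f' y) y) (hf' : HasDerivAt f' f'' x) :
    deriv (deriv f) x = f'' := by
  have hderiv : deriv f =ᶠ[𝓝 x] f' := hf.mono fun _ hy => hy.deriv
  rw [hderiv.deriv_eq, hf'.deriv]

noncomputable def landauRadial (B₀ β : ℝ) (m : ℕ) (r : ℝ) : ℝ :=
  gaussMonomial B₀ β r * kummerPoly (1 + β) m (B₀ * r ^ 2 / 2)

section LandauRadial

variable {B₀ β r : ℝ} {m : ℕ}

theorem landauRadial_eq_sum (hr : 0 < r) :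
    landauRadial B₀ β m r =
      ∑ n ∈ range (m + 1),
        kummerCoeff (1 + β) m n * (B₀ / 2) ^ n * gaussMonomial B₀ (β + 2 * n) r := by
  rw [landauRadial, kummerPoly, mul_sum]
  refine sum_congr rfl fun n _ => ?_
  rw [gaussMonomial_add_two_mul hr, mul_div_right_comm, mul_pow]
  ring

theorem landauRadial_ode (hβ : 0 ≤ β) (hr : 0 < r) :
    -deriv (deriv (landauRadial B₀ β m)) r - deriv (landauRadial B₀ β m) r / r
      + (β ^ 2 / r ^ 2 + B₀ ^ 2 * r ^ 2 / 4) * landauRadial B₀ β m r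
      = (2 * m + 1 + β) * B₀ * landauRadial B₀ β m r := by
  set a : ℕ → ℝ := fun n => kummerCoeff (1 + β) m n * (B₀ / 2) ^ n
  set γ : ℕ → ℝ := fun n => β + 2 * n
  set q : ℝ → ℕ → ℝ := fun x n => γ n / x - B₀ * x / 2
  have hsum : landauRadial B₀ β m =ᶠ[𝓝 r]
      fun x => ∑ n ∈ range (m + 1), a n * gaussMonomial B₀ (γ n) x :=
    eventually_of_mem (Ioi_mem_nhds hr) fun x hx => landauRadial_eq_sum hx
  have hderiv : ∀ᶠ x in 𝓝 r, HasDerivAt (landauRadial B₀ β m)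
      (∑ n ∈ range (m + 1), a n * (q x n * gaussMonomial B₀ (γ n) x)) x := by
    filter_upwards [hsum.eventually_nhds, Ioi_mem_nhds hr] with x hx hx0
    exact (HasDerivAt.fun_sum fun n _ =>
      (hasDerivAt_gaussMonomial hx0).const_mul (a n)).congr_of_eventuallyEq hx
  have hderiv2 : HasDerivAt
      (fun x => ∑ n ∈ range (m + 1), a n * (q x n * gaussMonomial B₀ (γ n) x))
      (∑ n ∈ range (m + 1),
        a n * ((q r n ^ 2 - γ n / r ^ 2 - B₀ / 2) * gaussMonomial B₀ (γ n) r)) r :=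
    HasDerivAt.fun_sum fun n _ => (hasDerivAt_gaussMonomial_deriv hr).const_mul (a n)
  rw [deriv_deriv_eq_of_hasDerivAt hderiv hderiv2, hderiv.self_of_nhds.deriv, hsum.eq_of_nhds,
    ← sub_eq_zero]
  set s := B₀ * r ^ 2 / 2
  have hterm : ∀ n ∈ range (m + 1),
      -(a n * ((q r n ^ 2 - γ n / r ^ 2 - B₀ / 2) * gaussMonomial B₀ (γ n) r))
        - a n * (q r n * gaussMonomial B₀ (γ n) r) / r
        + (β ^ 2 / r ^ 2 + B₀ ^ 2 * r ^ 2 / 4) * (a n * gaussMonomial B₀ (γ n) r)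
        - (2 * m + 1 + β) * B₀ * (a n * gaussMonomial B₀ (γ n) r)
      = 4 / r ^ 2 * gaussMonomial B₀ β r *
          (kummerCoeff (1 + β) m n * ((n - m) * s - n * (n - 1 + (1 + β))) * s ^ n) := by
    intro n _
    simp only [a, γ, q, s]
    rw [gaussMonomial_add_two_mul hr, show B₀ * r ^ 2 / 2 = B₀ / 2 * r ^ 2 by ring, mul_pow]
    field_simp
    ring
  simp only [mul_sum, sum_div, ← sum_neg_distrib, ← sum_sub_distrib, ← sum_add_distrib]
  rw [sum_congr rfl hterm, ← mul_sum, sum_kummerCoeff_mul_eq_zero (fun n => by positivity),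
    mul_zero]

end LandauRadial

theorem deriv_ofReal_comp (F : ℝ → ℝ) (x : ℝ) : deriv (fun y => (F y : ℂ)) x = deriv F x := by
  by_cases hF : DifferentiableAt ℝ F x
  · exact hF.hasDerivAt.ofReal_comp.deriv
  · have hF' : ¬DifferentiableAt ℝ (fun y => (F y : ℂ)) x := fun h => by
      have hre := reCLM.differentiableAt.comp x h
      simp only [Function.comp_def, reCLM_apply, ofReal_re] at hre
      exact hF hre
    rw [deriv_zero_of_not_differentiableAt hF, deriv_zero_of_not_differentiableAt hF', ofReal_zero]

theorem angOp_mul_cexp (B₀ α : ℝ) (k : ℤ) (R : ℝ → ℂ) :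
    angOp B₀ α (fun r θ => R r * Complex.exp (I * k * θ)) =
      fun (r θ : ℝ) => ((k + α + B₀ * r ^ 2 / 2) * R r) * Complex.exp (I * k * θ) := by
  funext r θ
  have hexp : HasDerivAt (fun θ : ℝ => R r * Complex.exp (I * k * θ))
      (R r * (Complex.exp (I * k * θ) * (I * k * 1))) θ :=
    ((((hasDerivAt_id θ).ofReal_comp).const_mul (I * k)).cexp).const_mul (R r)
  rw [angOp, hexp.deriv]
  linear_combination (-R r * k * Complex.exp (I * k * θ)) * I_sq

theorem Vkm_eq_landauRadial (B₀ α : ℝ) (k : ℤ) (m : ℕ) :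
    Vkm B₀ α k m = fun (r θ : ℝ) =>
      (landauRadial B₀ |(k : ℝ) + α| m r : ℂ) * Complex.exp (I * k * θ) := by
  funext r θ
  rw [Vkm, Pkm_eq_kummerPoly]
  rfl

theorem stmt_16_general (B₀ α : ℝ) (k : ℤ) (m : ℕ) (r θ : ℝ) (hr : 0 < r) :
    -(deriv (deriv (fun r' => Vkm B₀ α k m r' θ)) r)
      - (1 / (r : ℂ)) * deriv (fun r' => Vkm B₀ α k m r' θ) r
      + (1 / (r : ℂ) ^ 2) * angOp B₀ α (fun r' θ' => angOp B₀ α (Vkm B₀ α k m) r' θ') r θ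
      = (((2 * (m : ℝ) + 1 + |(k : ℝ) + α|) * B₀ + ((k : ℝ) + α) * B₀ : ℝ) : ℂ) *
          Vkm B₀ α k m r θ := by
  have hode := landauRadial_ode (B₀ := B₀) (m := m) (abs_nonneg ((k : ℝ) + α)) hr
  rw [sq_abs] at hode
  have hodeC := congrArg (fun x : ℝ => (x : ℂ)) hode
  push_cast at hodeC
  have hcoeff : ((k + α + B₀ * r ^ 2 / 2) / r) ^ 2
      = ((k : ℂ) + α) ^ 2 / r ^ 2 + B₀ ^ 2 * r ^ 2 / 4 + (k + α) * B₀ := by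
    have : (r : ℂ) ≠ 0 := ofReal_ne_zero.mpr hr.ne'
    field_simp
    ring
  rw [Vkm_eq_landauRadial, angOp_mul_cexp, angOp_mul_cexp]
  simp only [deriv_mul_const_field', deriv_ofReal_comp]
  push_cast
  linear_combination Complex.exp (I * k * θ) * hodeC
    + landauRadial B₀ |(k : ℝ) + α| m r * Complex.exp (I * k * θ) * hcoeff

theorem stmt_16 (B₀ α : ℝ) (hB : 0 < B₀) (hα : α ∈ Set.Ioo (0:ℝ) 1)
    (k : ℤ) (m : ℕ) (r θ : ℝ) (hr : 0 < r) :
    -(deriv (deriv (fun r' => Vkm B₀ α k m r' θ)) r)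
      - (1 / (r : ℂ)) * deriv (fun r' => Vkm B₀ α k m r' θ) r
      + (1 / (r : ℂ) ^ 2) * angOp B₀ α (fun r' θ' => angOp B₀ α (Vkm B₀ α k m) r' θ') r θ
      = (((2 * (m : ℝ) + 1 + |(k : ℝ) + α|) * B₀ + ((k : ℝ) + α) * B₀ : ℝ) : ℂ) *
          Vkm B₀ α k m r θ :=
  stmt_16_general B₀ α k m r θ hr
end
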